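/- Let $\gamma > 0$, $w \in \mathbb{R}$, and $y^* = \sigma_\gamma(w)$. For every solution $y(t)$ of $y' = \gamma + w y - y^2$ with $y(0) = b \geq 0$ defined for all $t \geq 0$, one has $y(t) \to y^*$ as $t \to \infty$; i.e., $y^*$ is globally asymptotically stable on $[0, \infty)$. -/

import Mathlib

/-!
`σ = sigmaAct γ w` is the positive root of `x² - w x - γ`, whose other root is `w - σ < 0`, so the
right-hand side factors as `(σ - y) (y + (σ - w))`. It is `γ > 0` at `y = 0`, hence a solution
starting at `b ≥ 0` stays nonnegative. There `V = (y - σ)²` satisfies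
`V' = -2 V (y + σ - w) ≤ -2 (σ - w) V`, and Grönwall gives exponential decay of `V`.
-/

noncomputable def sigmaAct (γ w : ℝ) : ℝ := (w + Real.sqrt (w ^ 2 + 4 * γ)) / 2

open Real Set Filter Topology

lemma sigmaAct_sq_sub_mul {γ w : ℝ} (h : 0 ≤ w ^ 2 + 4 * γ) :
    sigmaAct γ w ^ 2 - w * sigmaAct γ w = γ := by
  unfold sigmaAct
  linear_combination (1 / 4 : ℝ) * sq_sqrt h

lemma lt_sigmaAct {γ w : ℝ} (hγ : 0 < γ) : w < sigmaAct γ w := by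
  have hsq := sq_sqrt (by positivity : 0 ≤ w ^ 2 + 4 * γ)
  have hnonneg := sqrt_nonneg (w ^ 2 + 4 * γ)
  unfold sigmaAct
  nlinarith

lemma perceptron_rhs_eq {γ w : ℝ} (h : 0 ≤ w ^ 2 + 4 * γ) (x : ℝ) :
    γ + w * x - x ^ 2 = (sigmaAct γ w - x) * (x + (sigmaAct γ w - w)) := by
  linear_combination -(sigmaAct_sq_sub_mul h)

lemma nonneg_of_hasDerivAt_pos_of_eq_zero {y y' : ℝ → ℝ}
    (hy : ∀ t, 0 ≤ t → HasDerivAt y (y' t) t) (hpos : ∀ t, 0 ≤ t → y t = 0 → 0 < y' t)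
    (h0 : 0 ≤ y 0) {t : ℝ} (ht : 0 ≤ t) : 0 ≤ y t := by
  have hcont : ContinuousOn (fun s => -y s) (Icc 0 t) := fun s hs =>
    (hy s hs.1).continuousAt.neg.continuousWithinAt
  have key := image_le_of_deriv_right_lt_deriv_boundary' hcont
    (fun s hs => (hy s hs.1).neg.hasDerivWithinAt) (by simpa using h0)
    continuousOn_const (fun s _ => hasDerivWithinAt_const s _ (0 : ℝ))
    (fun s hs hys => by simpa using hpos s hs.1 (neg_eq_zero.1 hys)) ⟨ht, le_rfl⟩
  simpa using key

lemma le_mul_exp_of_hasDerivAt_le_mul {V V' : ℝ → ℝ} {K : ℝ}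
    (hV : ∀ t, 0 ≤ t → HasDerivAt V (V' t) t) (hbound : ∀ t, 0 ≤ t → V' t ≤ K * V t)
    {t : ℝ} (ht : 0 ≤ t) : V t ≤ V 0 * exp (K * t) := by
  have key := le_gronwallBound_of_liminf_deriv_right_le (δ := V 0) (K := K) (ε := 0)
    (a := 0) (b := t) (fun s hs => (hV s hs.1).continuousAt.continuousWithinAt)
    (fun s hs _ hr => (hV s hs.1).hasDerivWithinAt.liminf_right_slope_le hr) le_rfl
    (fun s hs => by simpa using hbound s hs.1) t ⟨ht, le_rfl⟩
  simpa [gronwallBound_ε0] using key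

lemma tendsto_of_sq_sub_le_mul_exp {f : ℝ → ℝ} {a C k : ℝ} (hk : 0 < k)
    (h : ∀ᶠ t in atTop, (f t - a) ^ 2 ≤ C * exp (-k * t)) : Tendsto f atTop (𝓝 a) := by
  have hexp : Tendsto (fun t => C * exp (-k * t)) atTop (𝓝 0) := by
    simpa using (tendsto_exp_atBot.comp
      (tendsto_id.const_mul_atTop_of_neg (neg_neg_of_pos hk))).const_mul C
  refine tendsto_iff_norm_sub_tendsto_zero.2 <|
    squeeze_zero' (Eventually.of_forall fun _ => norm_nonneg _) (h.mono fun t ht => ?_)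
      (by simpa using hexp.sqrt)
  rw [norm_eq_abs, ← sqrt_sq_eq_abs]
  exact sqrt_le_sqrt (by simpa only [neg_mul] using ht)

/-- Global asymptotic stability of `y* = σ_γ(w)` for the chemical perceptron ODE
`y' = γ + w y - y²` with nonnegative initial condition. -/
theorem perceptron_global_stability (γ w b : ℝ) (hγ : 0 < γ) (hb : 0 ≤ b)
    (y : ℝ → ℝ) (hy : ∀ t : ℝ, 0 ≤ t → HasDerivAt y (γ + w * y t - (y t) ^ 2) t)
    (hy0 : y 0 = b) :
    Filter.Tendsto y Filter.atTop (nhds (sigmaAct γ w)) := by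
  set σ := sigmaAct γ w
  have hdisc : 0 ≤ w ^ 2 + 4 * γ := by positivity
  have hc : 0 < σ - w := sub_pos.2 (lt_sigmaAct hγ)
  have hnonneg : ∀ t, 0 ≤ t → 0 ≤ y t := fun t ht =>
    nonneg_of_hasDerivAt_pos_of_eq_zero hy (fun s _ hys => by simpa [hys] using hγ)
      (hy0 ▸ hb) ht
  have hdecay : ∀ t, 0 ≤ t → (y t - σ) ^ 2 ≤ (y 0 - σ) ^ 2 * exp (-(2 * (σ - w)) * t) :=
    fun t ht => le_mul_exp_of_hasDerivAt_le_mul (V := fun s => (y s - σ) ^ 2)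
      (fun s hs => ((hy s hs).sub_const σ).pow 2)
      (fun s hs => by
        rw [perceptron_rhs_eq hdisc]
        norm_num
        nlinarith [mul_nonneg (sq_nonneg (y s - σ)) (hnonneg s hs)])
      ht
  exact tendsto_of_sq_sub_le_mul_exp (by positivity) ((eventually_ge_atTop 0).mono hdecay)
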